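/- Every weighted symmetric Boolean game is a weighted potential game with weights the reciprocals of the symmetry weights: if n ≥ 1, μ : Fin n → ℝ with μ i > 0 for all i, and c : Fin n → ((Fin n → Fin 2) → ℝ) satisfies μ_i · c i x = μ_{σ i} · c (σ i) (x ∘ σ⁻¹) for every σ ∈ Equiv.Perm (Fin n), player i, and profile x, then there exists P : (Fin n → Fin 2) → ℝ such that for every player i and all profiles x, y with x j = y j for all j ≠ i, c i x − c i y = (1 / μ_i) · (P x − P y). -/

import Mathlib

/-!
Any two profiles with the same number `|x|` of players choosing `1` differ by a relabelling of
the players, so weighted symmetry makes `μ i * c i x` depend only on `x i` and `|x|`. Hence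
`μ i` times the gain of any player switching from `0` to `1` while `k` others play `1` is a
number `Δ k` that does not depend on the player, and `P x = ∑_{k < |x|} Δ k` is a potential.
-/

open Finset

theorem Equiv.Perm.exists_comp_eq_of_card_fiber_eq {α β : Type*} [Fintype α] [DecidableEq β]
    {f g : α → β} (h : ∀ b, #{a | f a = b} = #{a | g a = b}) :
    ∃ σ : Equiv.Perm α, g ∘ σ = f :=
  ⟨Equiv.ofFiberEquiv fun b =>
      Fintype.equivOfCardEq (by simpa only [Fintype.card_subtype] using h b),
    funext (Equiv.ofFiberEquiv_map _)⟩

section BooleanProfiles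

variable {α : Type*} [Fintype α]

theorem card_fiber_eq_of_card_filter_eq_one {x y : α → Fin 2}
    (h : #{a | x a = 1} = #{a | y a = 1}) (b : Fin 2) : #{a | x a = b} = #{a | y a = b} := by
  have hsum (z : α → Fin 2) : #{a | z a = 0} + #{a | z a = 1} = Fintype.card α := by
    rw [← Fin.sum_univ_two (fun b => #{a | z a = b}), ← card_univ]
    exact (card_eq_sum_card_fiberwise fun a _ => mem_univ (z a)).symm
  have hx := hsum x
  have hy := hsum y
  fin_cases b
  · change #{a | x a = 0} = #{a | y a = 0}
    omega
  · exact h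

variable [DecidableEq α]

theorem exists_perm_apply_eq_and_comp_eq {x y : α → Fin 2} {i j : α} (hij : x i = y j)
    (h : #{a | x a = 1} = #{a | y a = 1}) : ∃ σ : Equiv.Perm α, σ i = j ∧ y ∘ σ = x := by
  obtain ⟨τ, hτ⟩ :=
    Equiv.Perm.exists_comp_eq_of_card_fiber_eq (card_fiber_eq_of_card_filter_eq_one h)
  have hτi : y (τ i) = y j := by rw [← hij, ← hτ, Function.comp_apply]
  refine ⟨Equiv.swap (τ i) j * τ, by simp, ?_⟩
  have hswap : y ∘ Equiv.swap (τ i) j = y := by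
    funext a
    rcases eq_or_ne a (τ i) with rfl | ha
    · simp [hτi]
    rcases eq_or_ne a j with rfl | hb
    · simp [hτi]
    · simp [Equiv.swap_apply_of_ne_of_ne ha hb]
  rw [Equiv.Perm.coe_mul, ← Function.comp_assoc, hswap, hτ]

theorem card_filter_eq_one_eq_succ {x y : α → Fin 2} {i : α} (hx : x i = 1) (hy : y i = 0)
    (hxy : ∀ j, j ≠ i → x j = y j) : #{a | x a = 1} = #{a | y a = 1} + 1 := by
  rw [← card_insert_of_notMem (s := {a | y a = 1}) (a := i) (by simp [hy])]
  congr 1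
  ext a
  by_cases ha : a = i <;> simp [ha, hx, hxy]

end BooleanProfiles

def IsWeightedSymmetric {ι : Type*} (μ : ι → ℝ) (c : ι → (ι → Fin 2) → ℝ) : Prop :=
  ∀ (σ : Equiv.Perm ι) (i : ι) (x : ι → Fin 2),
    μ i * c i x = μ (σ i) * c (σ i) (x ∘ ⇑σ.symm)

theorem IsWeightedSymmetric.mul_apply_eq {ι : Type*} [Fintype ι] [DecidableEq ι]
    {μ : ι → ℝ} {c : ι → (ι → Fin 2) → ℝ} (h : IsWeightedSymmetric μ c) {i j : ι}
    {x y : ι → Fin 2}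
    (hij : x i = y j) (hxy : #{a | x a = 1} = #{a | y a = 1}) : μ i * c i x = μ j * c j y := by
  obtain ⟨σ, rfl, rfl⟩ := exists_perm_apply_eq_and_comp_eq hij hxy
  rw [h σ i, Function.comp_assoc, Equiv.self_comp_symm, Function.comp_id]

def firstOnes (n k : ℕ) : Fin n → Fin 2 := fun l => if (l : ℕ) < k then 1 else 0

theorem card_firstOnes {n k : ℕ} (hk : k ≤ n) : #{l | firstOnes n k l = 1} = k := by
  simp [firstOnes, Fin.card_filter_val_lt, hk]

section Potential

variable {n : ℕ} (μ : Fin n → ℝ) (c : Fin n → (Fin n → Fin 2) → ℝ)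

/-- By `IsWeightedSymmetric.mul_apply_eq`, this is `μ i` times the gain of any player `i`
switching from `0` to `1` while `k` others play `1`; here it is read off player `k`. -/
noncomputable def symmetricGain (k : ℕ) : ℝ :=
  if hk : k < n then
    μ ⟨k, hk⟩ * (c ⟨k, hk⟩ (firstOnes n (k + 1)) - c ⟨k, hk⟩ (firstOnes n k))
  else 0

noncomputable def symmetricPotential (x : Fin n → Fin 2) : ℝ :=
  ∑ k ∈ range #{l | x l = 1}, symmetricGain μ c k

variable {μ c}

theorem IsWeightedSymmetric.mul_sub_eq_symmetricPotential_sub_of_switch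
    (h : IsWeightedSymmetric μ c) {i : Fin n} {x y : Fin n → Fin 2} (hx : x i = 1) (hy : y i = 0)
    (hxy : ∀ j, j ≠ i → x j = y j) :
    μ i * (c i x - c i y) = symmetricPotential μ c x - symmetricPotential μ c y := by
  have hones := card_filter_eq_one_eq_succ hx hy hxy
  set k := #{l | y l = 1}
  have hk : k < n := by
    simpa using card_lt_univ_of_notMem (s := {l | y l = 1}) (x := i) (by simp [hy])
  have hcx : μ i * c i x = μ ⟨k, hk⟩ * c ⟨k, hk⟩ (firstOnes n (k + 1)) :=
    h.mul_apply_eq (by simp [firstOnes, hx]) (by rw [card_firstOnes hk, hones])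
  have hcy : μ i * c i y = μ ⟨k, hk⟩ * c ⟨k, hk⟩ (firstOnes n k) :=
    h.mul_apply_eq (by simp [firstOnes, hy]) (by rw [card_firstOnes hk.le])
  rw [symmetricPotential, symmetricPotential, hones, sum_range_succ, add_sub_cancel_left,
    symmetricGain, dif_pos hk]
  linear_combination hcx - hcy

theorem IsWeightedSymmetric.mul_sub_eq_symmetricPotential_sub (h : IsWeightedSymmetric μ c)
    {i : Fin n} {x y : Fin n → Fin 2} (hxy : ∀ j, j ≠ i → x j = y j) :
    μ i * (c i x - c i y) = symmetricPotential μ c x - symmetricPotential μ c y := by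
  by_cases hi : x i = y i
  · obtain rfl : x = y := funext fun j => by
      rcases eq_or_ne j i with rfl | hj
      · exact hi
      · exact hxy j hj
    simp
  rcases (by decide : ∀ a b : Fin 2, a ≠ b → a = 1 ∧ b = 0 ∨ a = 0 ∧ b = 1) _ _ hi with
    ⟨hx, hy⟩ | ⟨hx, hy⟩
  · exact h.mul_sub_eq_symmetricPotential_sub_of_switch hx hy hxy
  · have := h.mul_sub_eq_symmetricPotential_sub_of_switch hy hx fun j hj => (hxy j hj).symm
    linear_combination -this

end Potential

theorem stmt16_general (n : ℕ) (μ : Fin n → ℝ) (hμ : ∀ i, 0 < μ i)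
    (c : Fin n → (Fin n → Fin 2) → ℝ)
    (hsym : ∀ (σ : Equiv.Perm (Fin n)) (i : Fin n) (x : Fin n → Fin 2),
      μ i * c i x = μ (σ i) * c (σ i) (x ∘ ⇑σ.symm)) :
    ∃ P : (Fin n → Fin 2) → ℝ,
      ∀ (i : Fin n) (x y : Fin n → Fin 2), (∀ j, j ≠ i → x j = y j) →
        c i x - c i y = (1 / μ i) * (P x - P y) := by
  refine ⟨symmetricPotential μ c, fun i x y hxy => ?_⟩
  rw [← IsWeightedSymmetric.mul_sub_eq_symmetricPotential_sub hsym hxy, one_div,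
    inv_mul_cancel_left₀ (hμ i).ne']

/-- every weighted symmetric Boolean game (with positive weights
`μ`) is a weighted potential game with weights `1 / μ i`. -/
theorem stmt16 (n : ℕ) (hn : 1 ≤ n) (μ : Fin n → ℝ) (hμ : ∀ i, 0 < μ i)
    (c : Fin n → (Fin n → Fin 2) → ℝ)
    (hsym : ∀ (σ : Equiv.Perm (Fin n)) (i : Fin n) (x : Fin n → Fin 2),
      μ i * c i x = μ (σ i) * c (σ i) (x ∘ ⇑σ.symm)) :
    ∃ P : (Fin n → Fin 2) → ℝ,
      ∀ (i : Fin n) (x y : Fin n → Fin 2), (∀ j, j ≠ i → x j = y j) →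
        c i x - c i y = (1 / μ i) * (P x - P y) :=
  stmt16_general n μ hμ c hsym
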